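/- Let R > 0 and let π ≥ β ≥ γ ≥ δ ≥ 0. Set A = (−R, 0), B = P_R(β), C = P_R(γ), D = P_R(δ), E = (R, 0), so that ABCDE is a pentagon inscribed in the upper semicircle with the side AE as diameter of length 2R. Writing a = dist A B, b = dist B C, c = dist C D, d = dist D E for the sides and x = dist A C, y = dist C E for the diagonals from C, one has 4R² = a² + b² + c² + d² + (a·b·y + x·c·d)/R. -/

import Mathlib

/-! Write `x = AC`, `y = CE`. By Thales, `x² + y² = (2R)²`. In the cyclic quadrilateral `ABCE` the
angle at `B` is supplementary to the angle at `E`, whose cosine is `y / 2R` because `ACE` is right-angled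
at `C`; so the law of cosines in `ABC` gives `x² = a² + b² + a b y / R`. Symmetrically
`y² = c² + d² + x c d / R`, and adding the two gives the identity. -/

noncomputable def P (R θ : ℝ) : EuclideanSpace ℝ (Fin 2) :=
  (WithLp.equiv 2 (Fin 2 → ℝ)).symm ![R * Real.cos θ, R * Real.sin θ]

open Real

lemma dist_P_sq (R α θ : ℝ) :
    dist (P R α) (P R θ) ^ 2 = (R * cos α - R * cos θ) ^ 2 + (R * sin α - R * sin θ) ^ 2 := by
  rw [EuclideanSpace.dist_eq, sq_sqrt (by positivity), Fin.sum_univ_two]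
  simp [P, Real.dist_eq, sq_abs]

lemma dist_P (R α θ : ℝ) (hR : 0 ≤ R) (hθα : θ ≤ α) (hαθ : α ≤ θ + 2 * π) :
    dist (P R α) (P R θ) = 2 * R * sin ((α - θ) / 2) := by
  have hsin : 0 ≤ sin ((α - θ) / 2) := sin_nonneg_of_nonneg_of_le_pi (by linarith) (by linarith)
  refine (sq_eq_sq₀ dist_nonneg (by positivity)).mp ?_
  have hcos : cos (α - θ) = 1 - 2 * sin ((α - θ) / 2) ^ 2 := by
    rw [← cos_two_mul_eq_one_sub]
    ring_nf
  rw [dist_P_sq]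
  linear_combination R ^ 2 * sin_sq_add_cos_sq α + R ^ 2 * sin_sq_add_cos_sq θ +
    2 * R ^ 2 * cos_sub α θ - 2 * R ^ 2 * hcos

lemma dist_P_pi_sq_add_dist_P_zero_sq (R γ : ℝ) :
    dist (P R π) (P R γ) ^ 2 + dist (P R γ) (P R 0) ^ 2 = (2 * R) ^ 2 := by
  rw [dist_P_sq, dist_P_sq, cos_pi, sin_pi, cos_zero, sin_zero]
  linear_combination 2 * R ^ 2 * sin_sq_add_cos_sq γ

lemma dist_P_pi_sub (R α θ : ℝ) : dist (P R (π - α)) (P R (π - θ)) = dist (P R α) (P R θ) := by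
  refine (sq_eq_sq₀ dist_nonneg dist_nonneg).mp ?_
  rw [dist_P_sq, dist_P_sq, cos_pi_sub, cos_pi_sub, sin_pi_sub, sin_pi_sub]
  ring

lemma cos_sub_sq_eq (u t : ℝ) :
    cos (u - t) ^ 2 = cos u ^ 2 + sin t ^ 2 + 2 * cos u * sin t * sin (u - t) := by
  rw [cos_sub, sin_sub]
  linear_combination sin t ^ 2 * sin_sq_add_cos_sq u + cos u ^ 2 * sin_sq_add_cos_sq t

lemma dist_P_pi_sq_eq_of_le (R β γ : ℝ) (hR : 0 < R) (hγ : 0 ≤ γ) (hγβ : γ ≤ β) (hβ : β ≤ π) :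
    dist (P R π) (P R γ) ^ 2 = dist (P R π) (P R β) ^ 2 + dist (P R β) (P R γ) ^ 2 +
      dist (P R π) (P R β) * dist (P R β) (P R γ) * dist (P R γ) (P R 0) / R := by
  have hπ := pi_pos
  rw [dist_P R π γ hR.le (by linarith) (by linarith), dist_P R π β hR.le hβ (by linarith),
    dist_P R β γ hR.le hγβ (by linarith), dist_P R γ 0 hR.le hγ (by linarith)]
  have hhalf (θ : ℝ) : sin ((π - θ) / 2) = cos (θ / 2) := by
    rw [← sin_pi_div_two_sub]
    ring_nf
  have key := cos_sub_sq_eq (β / 2) ((β - γ) / 2)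
  rw [show β / 2 - (β - γ) / 2 = γ / 2 by ring] at key
  rw [hhalf, hhalf, sub_zero]
  field_simp
  exact key

lemma dist_P_zero_sq_eq_of_le (R γ δ : ℝ) (hR : 0 < R) (hδ : 0 ≤ δ) (hδγ : δ ≤ γ) (hγ : γ ≤ π) :
    dist (P R γ) (P R 0) ^ 2 = dist (P R γ) (P R δ) ^ 2 + dist (P R δ) (P R 0) ^ 2 +
      dist (P R π) (P R γ) * dist (P R γ) (P R δ) * dist (P R δ) (P R 0) / R := by
  -- the reflection `θ ↦ π - θ` swaps the ends of the diameter
  have h := dist_P_pi_sq_eq_of_le R (π - δ) (π - γ) hR (by linarith) (by linarith) (by linarith)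
  have hπ0 : P R π = P R (π - 0) := by rw [sub_zero]
  have h0π : P R 0 = P R (π - π) := by rw [sub_self]
  rw [hπ0, h0π, dist_P_pi_sub, dist_P_pi_sub, dist_P_pi_sub, dist_P_pi_sub] at h
  simp only [dist_comm (P R 0), dist_comm (P R δ) (P R γ), dist_comm (P R γ) (P R π)] at h
  linear_combination h

theorem pentagon_pythagoras (R β γ δ : ℝ) (hR : 0 < R)
    (hδ : 0 ≤ δ) (hγδ : δ ≤ γ) (hβγ : γ ≤ β) (hβ : β ≤ Real.pi)
    (A B C D E : EuclideanSpace ℝ (Fin 2))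
    (hA : A = P R Real.pi) (hB : B = P R β) (hC : C = P R γ)
    (hD : D = P R δ) (hE : E = P R 0)
    (a b c d x y : ℝ)
    (ha : a = dist A B) (hb : b = dist B C) (hc : c = dist C D) (hd : d = dist D E)
    (hx : x = dist A C) (hy : y = dist C E) :
    4 * R ^ 2 = a ^ 2 + b ^ 2 + c ^ 2 + d ^ 2 + (a * b * y + x * c * d) / R := by
  subst hA hB hC hD hE ha hb hc hd hx hy
  have hthales := dist_P_pi_sq_add_dist_P_zero_sq R γ
  have hAC := dist_P_pi_sq_eq_of_le R β γ hR (hδ.trans hγδ) hβγ hβ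
  have hCE := dist_P_zero_sq_eq_of_le R γ δ hR hδ hγδ (hβγ.trans hβ)
  linear_combination -hthales + hAC + hCE
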